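/- For n ≥ 3, the function Ψ^{0,−}(s) = ∂_s(φ(s)^{(n-2)/2}) is a solution of the homogeneous equation L w = 0, where L = ∂_s² − ((n−2)/2)² + (n(3n−2)/4) φ^{2−2n}. -/

import Mathlib

/-!
With `a = n - 1` we have `φ^{(n-2)/2} = cosh(a s)^e` for `e = (n-2)/(2a)`, so `Ψ` is a multiple of
`w = sinh(a s) cosh(a s)^{e-1}`. Since `sinh² = cosh² - 1`, `w' = a(e cosh^e - (e-1) cosh^{e-2})`
involves `cosh` alone, and differentiating once more gives
`w'' = a²(e² - (e-1)(e-2) cosh(a s)^{-2}) w`. For this `e`, `a e = (n-2)/2`,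
`a²(e-1)(e-2) = n(3n-2)/4` and `cosh(a s)^{-2} = φ^{2-2n}`.
-/

/-- The profile function `φ` of the unit `n`-catenoid: `φ(s)^{n-1} = cosh((n-1)s)`. -/
noncomputable def catPhi (n : ℕ) (s : ℝ) : ℝ :=
  Real.cosh (((n : ℝ) - 1) * s) ^ ((1 : ℝ) / ((n : ℝ) - 1))

open Real

theorem hasDerivAt_cosh_mul_rpow (a r t : ℝ) :
    HasDerivAt (fun u => cosh (a * u) ^ r) (r * a * (sinh (a * t) * cosh (a * t) ^ (r - 1))) t := by
  have hcosh : HasDerivAt (fun u => cosh (a * u)) (sinh (a * t) * a) t :=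
    ((hasDerivAt_id t).const_mul a).cosh.congr_deriv (by simp)
  have hrpow := hasDerivAt_rpow_const (p := r) (Or.inl (cosh_pos (a * t)).ne')
  refine (hrpow.comp t hcosh).congr_deriv ?_
  ring

theorem hasDerivAt_sinh_mul_mul_cosh_mul_rpow (a e t : ℝ) :
    HasDerivAt (fun u => sinh (a * u) * cosh (a * u) ^ (e - 1))
      (a * (e * cosh (a * t) ^ e - (e - 1) * cosh (a * t) ^ (e - 2))) t := by
  have hsinh : HasDerivAt (fun u => sinh (a * u)) (cosh (a * t) * a) t :=
    ((hasDerivAt_id t).const_mul a).sinh.congr_deriv (by simp)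
  have hC : cosh (a * t) ≠ 0 := (cosh_pos (a * t)).ne'
  have hmul_cosh : cosh (a * t) ^ e = cosh (a * t) ^ (e - 1) * cosh (a * t) := by
    simpa using rpow_add_natCast hC (e - 1) 1
  have hmul_cosh_sq : cosh (a * t) ^ e = cosh (a * t) ^ (e - 2) * cosh (a * t) ^ 2 := by
    simpa using rpow_add_natCast hC (e - 2) 2
  refine (hsinh.mul (hasDerivAt_cosh_mul_rpow a (e - 1) t)).congr_deriv ?_
  rw [show e - 1 - 1 = e - 2 by ring]
  linear_combination (-a) * hmul_cosh - (a * (e - 1)) * hmul_cosh_sq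
    - (a * (e - 1) * cosh (a * t) ^ (e - 2)) * cosh_sq_sub_sinh_sq (a * t)

theorem deriv_deriv_sinh_mul_mul_cosh_mul_rpow (a e t : ℝ) :
    deriv (deriv fun u => sinh (a * u) * cosh (a * u) ^ (e - 1)) t
      = a ^ 2 * (e ^ 2 - (e - 1) * (e - 2) * cosh (a * t) ^ (-2 : ℝ))
          * (sinh (a * t) * cosh (a * t) ^ (e - 1)) := by
  have hderiv : (deriv fun u => sinh (a * u) * cosh (a * u) ^ (e - 1))
      = fun u => a * (e * cosh (a * u) ^ e - (e - 1) * cosh (a * u) ^ (e - 2)) :=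
    funext fun u => (hasDerivAt_sinh_mul_mul_cosh_mul_rpow a e u).deriv
  have hderiv2 : HasDerivAt
      (fun u => a * (e * cosh (a * u) ^ e - (e - 1) * cosh (a * u) ^ (e - 2))) _ t :=
    (((hasDerivAt_cosh_mul_rpow a e t).const_mul e).sub
      ((hasDerivAt_cosh_mul_rpow a (e - 2) t).const_mul (e - 1))).const_mul a
  have hpow : cosh (a * t) ^ (e - 2 - 1) = cosh (a * t) ^ (-2 : ℝ) * cosh (a * t) ^ (e - 1) := by
    rw [← rpow_add (cosh_pos (a * t))]
    ring_nf
  rw [hderiv, hderiv2.deriv, hpow]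
  ring

theorem catPhi_rpow (n : ℕ) (r s : ℝ) :
    catPhi n s ^ r = cosh (((n : ℝ) - 1) * s) ^ (r / ((n : ℝ) - 1)) := by
  rw [catPhi, ← rpow_mul (cosh_pos _).le, one_div_mul_eq_div]

/-- `Ψ^{0,−} = ∂_s(φ^{(n-2)/2})` is a Jacobi field: it solves
`L w = 0` where `L = ∂_s² − ((n−2)/2)² + (n(3n−2)/4) φ^{2−2n}`. -/
theorem scherk_stmt7 (n : ℕ) (hn : 3 ≤ n)
    (Ψ : ℝ → ℝ)
    (hΨ : ∀ s : ℝ, Ψ s = deriv (fun t => catPhi n t ^ (((n : ℝ) - 2) / 2)) s) :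
    ∀ s : ℝ,
      deriv (deriv Ψ) s - (((n : ℝ) - 2) / 2) ^ 2 * Ψ s
        + ((n : ℝ) * (3 * (n : ℝ) - 2) / 4) * catPhi n s ^ ((2 : ℝ) - 2 * n) * Ψ s = 0 := by
  intro s
  set a : ℝ := (n : ℝ) - 1 with ha_def
  have ha : a ≠ 0 := by
    have : (3 : ℝ) ≤ n := by exact_mod_cast hn
    linarith
  set e : ℝ := ((n : ℝ) - 2) / 2 / a
  have hea : e * a = ((n : ℝ) - 2) / 2 := div_mul_cancel₀ _ ha
  have hpotential : a ^ 2 * (e - 1) * (e - 2) = (n : ℝ) * (3 * (n : ℝ) - 2) / 4 := by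
    linear_combination (e * a + ((n : ℝ) - 2) / 2 - 3 * a) * hea
      + (2 * (a + (n : ℝ) - 1) - 3 * (((n : ℝ) - 2) / 2)) * ha_def
  have hΨ_eq : Ψ = fun t => e * a * (sinh (a * t) * cosh (a * t) ^ (e - 1)) :=
    funext fun t => by
      simp only [hΨ t, catPhi_rpow]
      exact (hasDerivAt_cosh_mul_rpow a e t).deriv
  have hφ : catPhi n s ^ ((2 : ℝ) - 2 * n) = cosh (a * s) ^ (-2 : ℝ) := by
    rw [catPhi_rpow, ← ha_def, show (2 : ℝ) - 2 * n = -2 * a by rw [ha_def]; ring,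
      mul_div_cancel_right₀ _ ha]
  simp only [hΨ_eq, deriv_const_mul_field']
  rw [deriv_deriv_sinh_mul_mul_cosh_mul_rpow, hφ]
  set w := sinh (a * s) * cosh (a * s) ^ (e - 1)
  linear_combination (e * a * w) * congrArg (· ^ 2) hea
    - (e * a * w * cosh (a * s) ^ (-2 : ℝ)) * hpotential
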